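/- Let α > 1. The function θ_α(t) = arccos((1−α²)/√((α²−1)(α²+t²−1))) has right derivative at t = 0 (derivative within the set [0, ∞) at the point 0) equal to −1/√(α²−1). In particular, this derivative is nonzero. -/

import Mathlib

/-! Writing `c = √(α² - 1)`, the argument of `arccos` is `-c / √(c² + t²) = -cos (arctan (t / c))`,
so `θ_α(t) = π - arctan (|t| / c)`. On `t ≥ 0` this is smooth with derivative `-1 / c` at `0`;
the `|t|` is why only the one-sided derivative exists. -/

open Real Set

lemma neg_sq_div_sqrt_eq_neg_inv_sqrt_one_add_sq {c : ℝ} (hc : 0 < c) (t : ℝ) :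
    -c ^ 2 / √(c ^ 2 * (c ^ 2 + t ^ 2)) = -(√(1 + (t / c) ^ 2))⁻¹ := by
  have hsum : 0 < c ^ 2 + t ^ 2 := by positivity
  have hsqrt : √(1 + (t / c) ^ 2) = √(c ^ 2 + t ^ 2) / c := by
    rw [← sqrt_sq hc.le, ← sqrt_div' _ (sq_nonneg c), sqrt_sq hc.le]
    congr 1
    field_simp
  rw [sqrt_mul (sq_nonneg c), sqrt_sq hc.le, hsqrt]
  have : √(c ^ 2 + t ^ 2) ≠ 0 := (sqrt_pos.2 hsum).ne'
  field_simp

lemma arccos_neg_sq_div_sqrt {c t : ℝ} (hc : 0 < c) (ht : 0 ≤ t) :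
    arccos (-c ^ 2 / √(c ^ 2 * (c ^ 2 + t ^ 2))) = π - arctan (t / c) := by
  rw [neg_sq_div_sqrt_eq_neg_inv_sqrt_one_add_sq hc, arccos_neg,
    arctan_eq_arccos (div_nonneg ht hc.le)]

lemma hasDerivAt_pi_sub_arctan_div_zero (c : ℝ) :
    HasDerivAt (fun t : ℝ => π - arctan (t / c)) (-1 / c) 0 :=
  ((((hasDerivAt_id (0 : ℝ)).div_const c).arctan).const_sub π).congr_deriv (by simp [neg_div])

/-- For α > 1, the function θ_α(t) = arccos((1−α²)/√((α²−1)(α²+t²−1))) has derivative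
    within [0, ∞) at 0 equal to −1/√(α²−1), and this derivative is nonzero. -/
theorem theta_hasDerivWithinAt_zero (α : ℝ) (hα : 1 < α) :
    HasDerivWithinAt
      (fun t : ℝ => Real.arccos ((1 - α ^ 2) / Real.sqrt ((α ^ 2 - 1) * (α ^ 2 + t ^ 2 - 1))))
      (-1 / Real.sqrt (α ^ 2 - 1)) (Set.Ici 0) 0 ∧
    (-1 / Real.sqrt (α ^ 2 - 1)) ≠ 0 := by
  set c := √(α ^ 2 - 1)
  have hc : 0 < c := sqrt_pos.2 (by nlinarith)
  have hc_sq : c ^ 2 = α ^ 2 - 1 := sq_sqrt (by nlinarith)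
  have htheta : ∀ t ∈ Ici (0 : ℝ),
      arccos ((1 - α ^ 2) / √((α ^ 2 - 1) * (α ^ 2 + t ^ 2 - 1))) = π - arctan (t / c) :=
    fun t ht => by
      rw [← arccos_neg_sq_div_sqrt hc ht, hc_sq]
      ring_nf
  refine ⟨(hasDerivAt_pi_sub_arctan_div_zero c).hasDerivWithinAt.congr_of_mem htheta
    self_mem_Ici, ?_⟩
  exact div_ne_zero (neg_ne_zero.2 one_ne_zero) hc.ne'
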